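/- arXiv:1810.00228 — 3 statements merged into one kernel-verified Lean document; each statement's English description precedes it below -/
import Mathlib

section
/- Let G be a topological group, H a closed subgroup of G such that the quotient space G/H is compact, and L a closed subgroup of G such that the quotient space L/(L ∩ H) is compact. Then the subset L·H = {l*h : l ∈ L, h ∈ H} is closed in G. -/
/-!
`L * H` is the preimage under `G → G ⧸ H` of the image of `L`. That image is the continuous image
of the compact space `L ⧸ (L ⊓ H)`, hence compact, hence closed because `G ⧸ H` is Hausdorff
for closed `H`.
-/

open scoped Pointwise

theorem QuotientGroup.isCompact_image_coe_of_compactSpace_subgroupOf {G : Type*} [Group G]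
    [TopologicalSpace G] (H L : Subgroup G) [CompactSpace (L ⧸ H.subgroupOf L)] :
    IsCompact (((↑) : G → G ⧸ H) '' L) := by
  let f : L ⧸ H.subgroupOf L → G ⧸ H :=
    Quotient.map' Subtype.val fun a b hab => by
      rwa [QuotientGroup.leftRel_apply] at hab ⊢
  have hf : Continuous f :=
    continuous_quot_lift _ (QuotientGroup.continuous_mk.comp continuous_subtype_val)
  have hrange : Set.range f = ((↑) : G → G ⧸ H) '' L := by
    rw [← QuotientGroup.mk_surjective.range_comp, ← Subtype.range_coe (s := (L : Set G)),
      ← Set.range_comp]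
    rfl
  exact hrange ▸ isCompact_range hf

theorem closed_mul_of_uniform_general {G : Type*} [Group G] [TopologicalSpace G]
    [IsTopologicalGroup G] (H L : Subgroup G)
    (hH : IsClosed (H : Set G))
    (hLH : CompactSpace (L ⧸ H.subgroupOf L)) :
    IsClosed ((L : Set G) * (H : Set G)) := by
  have := hH -- `IsClosed` is a class: this provides `T2Space (G ⧸ H)`
  rw [← QuotientGroup.preimage_image_mk_eq_mul]
  exact (QuotientGroup.isCompact_image_coe_of_compactSpace_subgroupOf H L).isClosed.preimage
    QuotientGroup.continuous_mk

/-- Let `G` be a (Hausdorff) topological group, `H` a closed subgroup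
such that `G/H` is compact, and `L` a closed subgroup such that `L/(L ∩ H)` is compact.
Then the set `L * H = {l * h : l ∈ L, h ∈ H}` is closed in `G`. -/
theorem closed_mul_of_uniform {G : Type*} [Group G] [TopologicalSpace G]
    [IsTopologicalGroup G] [T2Space G] (H L : Subgroup G)
    (hH : IsClosed (H : Set G)) (hL : IsClosed (L : Set G))
    (hGH : CompactSpace (G ⧸ H))
    (hLH : CompactSpace (L ⧸ H.subgroupOf L)) :
    IsClosed ((L : Set G) * (H : Set G)) :=
  closed_mul_of_uniform_general H L hH hLH
end

section
/- Let G be a topological group whose identity component G⁰ is open in G (for example, a Lie group), and let Γ be a discrete subgroup of G such that the quotient space G/Γ is compact. Then Γ ∩ G⁰ is a discrete subgroup of G⁰ and the quotient space G⁰/(Γ ∩ G⁰) is compact; that is, Γ ∩ G⁰ is a uniform lattice in G⁰. -/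
/-!
Discreteness passes to subgroups. For compactness, the inclusion `G⁰ → G` induces a continuous
injection `G⁰ ⧸ (Γ ∩ G⁰) → G ⧸ Γ` onto the image of `G⁰`. Because `G⁰` is an open subgroup, this
map is open and its image is clopen (the `G⁰`-translate of a point outside the image is an open
set missing it), so `G⁰ ⧸ (Γ ∩ G⁰)` is homeomorphic to a closed subset of the compact `G ⧸ Γ`.
-/

open Topology

namespace Subgroup

variable {G : Type*} [Group G]

theorem discreteTopology_subgroupOf [TopologicalSpace G] (Γ H : Subgroup G) [DiscreteTopology Γ] :
    DiscreteTopology (Γ.subgroupOf H) :=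
  DiscreteTopology.of_continuous_injective (f := fun x : Γ.subgroupOf H => (⟨x.1.1, x.2⟩ : Γ))
    (by fun_prop) fun _ _ h => Subtype.ext <| Subtype.ext (congrArg Subtype.val h :)

variable (H Γ : Subgroup G)

def quotientSubgroupOfToQuotient : H ⧸ Γ.subgroupOf H → G ⧸ Γ :=
  Quotient.map' Subtype.val fun a b hab => by
    rw [QuotientGroup.leftRel_apply] at hab ⊢
    simpa [mem_subgroupOf] using hab

@[simp]
theorem quotientSubgroupOfToQuotient_mk (h : H) :
    quotientSubgroupOfToQuotient H Γ (h : H ⧸ Γ.subgroupOf H) = ((h : G) : G ⧸ Γ) :=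
  rfl

theorem injective_quotientSubgroupOfToQuotient :
    Function.Injective (quotientSubgroupOfToQuotient H Γ) := by
  intro x y
  induction x using QuotientGroup.induction_on
  induction y using QuotientGroup.induction_on
  simp [QuotientGroup.eq, mem_subgroupOf]

theorem range_quotientSubgroupOfToQuotient :
    Set.range (quotientSubgroupOfToQuotient H Γ) = QuotientGroup.mk '' (H : Set G) := by
  ext y
  constructor
  · rintro ⟨⟨h⟩, rfl⟩
    exact ⟨h, h.2, rfl⟩
  · rintro ⟨g, hg, rfl⟩
    exact ⟨QuotientGroup.mk ⟨g, hg⟩, rfl⟩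

variable [TopologicalSpace G]

theorem continuous_quotientSubgroupOfToQuotient :
    Continuous (quotientSubgroupOfToQuotient H Γ) :=
  (QuotientGroup.isQuotientMap_mk _).continuous_iff.mpr <|
    QuotientGroup.continuous_mk.comp continuous_subtype_val

variable [SeparatelyContinuousMul G] {H}

theorem isOpenMap_quotientSubgroupOfToQuotient (hH : IsOpen (H : Set G)) :
    IsOpenMap (quotientSubgroupOfToQuotient H Γ) := by
  intro U hU
  have himage : quotientSubgroupOfToQuotient H Γ '' U =
      QuotientGroup.mk '' (Subtype.val '' (QuotientGroup.mk ⁻¹' U : Set H)) := by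
    conv_lhs => rw [← Set.image_preimage_eq U QuotientGroup.mk_surjective]
    rw [Set.image_image, Set.image_image]
    rfl
  rw [himage]
  exact QuotientGroup.isOpenMap_coe _
    (hH.isOpenMap_subtype_val _ (QuotientGroup.continuous_mk.isOpen_preimage U hU))

theorem isClosed_image_mk_of_isOpen (hH : IsOpen (H : Set G)) :
    IsClosed (QuotientGroup.mk '' (H : Set G) : Set (G ⧸ Γ)) := by
  rw [← isOpen_compl_iff, isOpen_iff_forall_mem_open]
  intro y hy
  obtain ⟨x, rfl⟩ := QuotientGroup.mk_surjective y
  refine ⟨(fun h => ((h * x : G) : G ⧸ Γ)) '' H, ?_,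
    (QuotientGroup.isOpenMap_coe.comp (isOpenMap_mul_right x)) _ hH, ⟨1, H.one_mem, by simp⟩⟩
  rintro _ ⟨h, hh, rfl⟩ ⟨h', hh', hhx⟩
  refine hy ⟨h⁻¹ * h', H.mul_mem (H.inv_mem hh) hh', ?_⟩
  rw [QuotientGroup.eq] at hhx ⊢
  simpa [mul_assoc] using hhx

theorem isClosedEmbedding_quotientSubgroupOfToQuotient (hH : IsOpen (H : Set G)) :
    IsClosedEmbedding (quotientSubgroupOfToQuotient H Γ) where
  toIsEmbedding := (IsOpenEmbedding.of_continuous_injective_isOpenMap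
    (continuous_quotientSubgroupOfToQuotient H Γ) (injective_quotientSubgroupOfToQuotient H Γ)
    (isOpenMap_quotientSubgroupOfToQuotient Γ hH)).toIsEmbedding
  isClosed_range := by
    rw [range_quotientSubgroupOfToQuotient]
    exact isClosed_image_mk_of_isOpen Γ hH

theorem compactSpace_quotient_subgroupOf (hH : IsOpen (H : Set G)) [CompactSpace (G ⧸ Γ)] :
    CompactSpace (H ⧸ Γ.subgroupOf H) :=
  (isClosedEmbedding_quotientSubgroupOfToQuotient Γ hH).compactSpace

end Subgroup

theorem lattice_in_identity_component_general {G : Type*} [Group G] [TopologicalSpace G]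
    [IsTopologicalGroup G]
    (hopen : IsOpen ((Subgroup.connectedComponentOfOne G : Subgroup G) : Set G))
    (Γ : Subgroup G) [DiscreteTopology Γ] (hGΓ : CompactSpace (G ⧸ Γ)) :
    DiscreteTopology (Γ.subgroupOf (Subgroup.connectedComponentOfOne G)) ∧
      CompactSpace ((Subgroup.connectedComponentOfOne G) ⧸
        Γ.subgroupOf (Subgroup.connectedComponentOfOne G)) :=
  ⟨Subgroup.discreteTopology_subgroupOf Γ _, Subgroup.compactSpace_quotient_subgroupOf Γ hopen⟩

/-- Let `G` be a topological group whose identity component `G⁰` is open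
(e.g. a Lie group), and `Γ` a discrete subgroup of `G` with `G/Γ` compact. Then
`Γ ∩ G⁰` is a discrete subgroup of `G⁰` and `G⁰/(Γ ∩ G⁰)` is compact, i.e. `Γ ∩ G⁰`
is a uniform lattice in `G⁰`. -/
theorem lattice_in_identity_component {G : Type*} [Group G] [TopologicalSpace G]
    [IsTopologicalGroup G] [T2Space G]
    (hopen : IsOpen ((Subgroup.connectedComponentOfOne G : Subgroup G) : Set G))
    (Γ : Subgroup G) [DiscreteTopology Γ] (hGΓ : CompactSpace (G ⧸ Γ)) :
    DiscreteTopology (Γ.subgroupOf (Subgroup.connectedComponentOfOne G)) ∧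
      CompactSpace ((Subgroup.connectedComponentOfOne G) ⧸
        Γ.subgroupOf (Subgroup.connectedComponentOfOne G)) :=
  lattice_in_identity_component_general hopen Γ hGΓ
end

section
/- Let G be a topological group acting continuously and properly on a locally compact Hausdorff space X, and let Γ be a discrete subgroup of G such that the orbit space X/Γ is compact. Then the coset space G/Γ is compact; that is, Γ is a uniform lattice in G. -/
/-!
Since the orbit map `X → X/Γ` is open, finitely many compact neighbourhoods cover the compact
orbit space, giving a compact `K ⊆ X` that meets every `Γ`-orbit. Fix `x₀ ∈ X`: every coset
`gΓ` contains some `h` with `h • k = x₀` for a `k ∈ K`, and by properness these `h` form a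
compact set, whose image is all of `G ⧸ Γ`.
-/

open Set Pointwise

theorem IsOpenMap.exists_isCompact_image_eq_univ {X Y : Type*} [TopologicalSpace X]
    [TopologicalSpace Y] [LocallyCompactSpace X] [CompactSpace Y] {f : X → Y}
    (hf : IsOpenMap f) (hsurj : Function.Surjective f) :
    ∃ K : Set X, IsCompact K ∧ f '' K = univ := by
  choose N hN hNx using fun x : X => exists_compact_mem_nhds x
  choose s hs using hsurj
  obtain ⟨t, -, ht⟩ := isCompact_univ.elim_nhds_subcover (fun y => f '' N (s y))
    fun y _ => by simpa [hs y] using hf.image_mem_nhds (hNx (s y))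
  refine ⟨⋃ y ∈ t, N (s y), t.isCompact_biUnion fun y _ => hN _, ?_⟩
  rw [image_iUnion₂]
  exact univ_subset_iff.mp ht

theorem QuotientGroup.image_mk_setOf_smul_inter_nonempty_eq_univ {G X : Type*} [Group G]
    [MulAction G X] (Γ : Subgroup G) {K : Set X}
    (hK : Quotient.mk (MulAction.orbitRel Γ X) '' K = univ) (x₀ : X) :
    (QuotientGroup.mk : G → G ⧸ Γ) '' {g : G | (g • K ∩ {x₀}).Nonempty} = univ := by
  refine eq_univ_of_forall fun y => ?_
  obtain ⟨g, rfl⟩ := QuotientGroup.mk_surjective y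
  obtain ⟨k, hk, hkq⟩ := hK.symm ▸ mem_univ (Quotient.mk _ (g⁻¹ • x₀))
  obtain ⟨γ, hγ⟩ := MulAction.orbitRel_apply.mp (Quotient.exact hkq)
  refine ⟨g * (γ : G)⁻¹, ⟨x₀, ⟨k, hk, ?_⟩, rfl⟩, ?_⟩
  · simp [← hγ, Subgroup.smul_def, smul_smul]
  · rw [QuotientGroup.eq]
    simp

theorem compactSpace_quotient_of_compact_orbit_quotient_general {G : Type*} [Group G]
    [TopologicalSpace G] {X : Type*} [TopologicalSpace X]
    [LocallyCompactSpace X] [Nonempty X]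
    [MulAction G X] [ProperSMul G X]
    (Γ : Subgroup G)
    (hXΓ : CompactSpace (Quotient (MulAction.orbitRel Γ X))) :
    CompactSpace (G ⧸ Γ) := by
  obtain ⟨K, hK, hKΓ⟩ := MulAction.isOpenQuotientMap_quotientMk.isOpenMap
    |>.exists_isCompact_image_eq_univ (Quotient.mk_surjective (s := MulAction.orbitRel Γ X))
  obtain ⟨x₀⟩ := ‹Nonempty X›
  rw [← isCompact_univ_iff,
    ← QuotientGroup.image_mk_setOf_smul_inter_nonempty_eq_univ Γ hKΓ x₀]
  exact (ProperSMul.isCompact_setOfPred_inter_nonempty hK isCompact_singleton).image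
    continuous_quotient_mk'

/-- Let `G` be a topological group acting continuously and properly on a
(nonempty) locally compact Hausdorff space `X`, and let `Γ` be a discrete subgroup of `G`
such that the orbit space `X/Γ` is compact. Then `G/Γ` is compact; that is, `Γ` is a
uniform lattice in `G`. -/
theorem compactSpace_quotient_of_compact_orbit_quotient {G : Type*} [Group G]
    [TopologicalSpace G] [IsTopologicalGroup G] {X : Type*} [TopologicalSpace X]
    [T2Space X] [LocallyCompactSpace X] [Nonempty X]
    [MulAction G X] [ContinuousSMul G X] [ProperSMul G X]
    (Γ : Subgroup G) [DiscreteTopology Γ]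
    (hXΓ : CompactSpace (Quotient (MulAction.orbitRel Γ X))) :
    CompactSpace (G ⧸ Γ) :=
  compactSpace_quotient_of_compact_orbit_quotient_general Γ hXΓ
end
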